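/- arXiv:2107.05711 — 6 statements merged into one kernel-verified Lean document; each statement's English description precedes it below -/
import Mathlib

section
/- Let B > 0. The family W = {(W_i, v_i)}_{i∈I} is a (C,C')-controlled fusion frame for H with some lower bound A > 0 and upper bound B if and only if: (a) for every f ∈ H the sequence T_W f := (v_i (C*π_{W_i}C')^{1/2} f)_{i∈I} lies in ℓ²(I,H) and T_W : H → ℓ²(I,H) is a bounded linear operator with ‖T_W‖ ≤ √B — so that its Hilbert-space adjoint T_W* : ℓ²(I,H) → H, given by T_W*((g_i)_{i∈I}) = Σ_{i∈I} v_i (C*π_{W_i}C')^{1/2} g_i and satisfying T_W*(T_W f) = Σ_{i∈I} v_i² C*π_{W_i}C' f, is bounded with ‖T_W*‖ ≤ √B — and (b) T_W* is surjective onto H. -/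
/-!
The frame inequalities say that the analysis operator `T f = (v i • sq i f)ᵢ` satisfies
`A ‖f‖² ≤ ‖T f‖² ≤ B ‖f‖²`. The upper bound is the boundedness of `T` with `‖T‖ ≤ √B`; the lower
bound is equivalent to the surjectivity of `T†`. If `T†` is onto, the open mapping theorem gives
preimages `T† y = x` with `‖y‖ ≤ c ‖x‖`, and `‖x‖² = ⟪y, T x⟫ ≤ c ‖x‖ ‖T x‖`. Conversely, if `T` is
bounded below then so is `T† T`, whose range is therefore closed, with orthogonal complement
`ker (T† T) = ker T = 0`; hence `T† T`, and a fortiori `T†`, is onto.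
-/

open ContinuousLinearMap

/-- The controlled operator `C* ∘ π_W ∘ C'`. -/
noncomputable def ctrlOp {H : Type*} [NormedAddCommGroup H] [InnerProductSpace ℂ H]
    [CompleteSpace H] (C C' : H →L[ℂ] H) (W : Submodule ℂ H) [CompleteSpace W] :
    H →L[ℂ] H :=
  ContinuousLinearMap.adjoint C ∘L ((W.subtypeL ∘L W.orthogonalProjection) ∘L C')

namespace lp

variable {ι : Type*} {E : ι → Type*} [∀ i, NormedAddCommGroup (E i)]

theorem norm_sq_eq_tsum_norm_sq (g : lp E 2) : ‖g‖ ^ 2 = ∑' i, ‖g i‖ ^ 2 := by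
  simpa [Real.rpow_two] using lp.norm_rpow_eq_tsum (p := 2) (by norm_num) g

theorem summable_norm_sq (g : lp E 2) : Summable fun i => ‖g i‖ ^ 2 := by
  simpa [Real.rpow_two] using (memℓp_gen_iff (p := 2) (by norm_num)).1 (lp.memℓp g)

end lp

theorem exists_lp_two_apply_eq_of_tsum_norm_sq_le {𝕜 X ι : Type*} [NontriviallyNormedField 𝕜]
    [SeminormedAddCommGroup X] [NormedSpace 𝕜 X] {E : ι → Type*} [∀ i, NormedAddCommGroup (E i)]
    [∀ i, NormedSpace 𝕜 (E i)] (L : ∀ i, X →L[𝕜] E i) (B : ℝ)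
    (hsum : ∀ x, Summable fun i => ‖L i x‖ ^ 2) (hle : ∀ x, ∑' i, ‖L i x‖ ^ 2 ≤ B * ‖x‖ ^ 2) :
    ∃ T : X →L[𝕜] lp E 2, (∀ x i, T x i = L i x) ∧ ‖T‖ ≤ √B := by
  have hmem (x : X) : Memℓp (fun i => L i x) 2 :=
    memℓp_gen (by simpa [Real.rpow_two] using hsum x)
  let T₀ : X →ₗ[𝕜] lp E 2 :=
    { toFun x := ⟨fun i => L i x, hmem x⟩
      map_add' x y := Subtype.ext <| funext fun i => map_add (L i) x y
      map_smul' c x := Subtype.ext <| funext fun i => map_smul (L i) c x }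
  have hbound (x : X) : ‖T₀ x‖ ≤ √B * ‖x‖ := by
    rw [← Real.sqrt_sq (norm_nonneg x), ← Real.sqrt_mul' _ (sq_nonneg _)]
    refine Real.le_sqrt_of_sq_le ?_
    rw [lp.norm_sq_eq_tsum_norm_sq]
    exact hle x
  exact ⟨T₀.mkContinuous √B hbound, fun _ _ => rfl,
    T₀.mkContinuous_norm_le (Real.sqrt_nonneg B) hbound⟩

namespace ContinuousLinearMap

variable {𝕜 E F : Type*} [RCLike 𝕜] [NormedAddCommGroup E] [InnerProductSpace 𝕜 E]
  [CompleteSpace E] [NormedAddCommGroup F] [InnerProductSpace 𝕜 F] [CompleteSpace F]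

theorem surjective_adjoint_of_mul_norm_sq_le {T : E →L[𝕜] F} {A : ℝ} (hA : 0 < A)
    (hT : ∀ x, A * ‖x‖ ^ 2 ≤ ‖T x‖ ^ 2) : Function.Surjective (adjoint T) := by
  set S := adjoint T ∘L T
  have hS (x : E) : A * ‖x‖ ≤ ‖S x‖ := by
    rcases (norm_nonneg x).eq_or_lt with hx | hx
    · simp [← hx]
    have : A * ‖x‖ ^ 2 ≤ ‖S x‖ * ‖x‖ := calc
      A * ‖x‖ ^ 2 ≤ ‖T x‖ ^ 2 := hT x
      _ = RCLike.re (inner 𝕜 (S x) x) := apply_norm_sq_eq_inner_adjoint_left T x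
      _ ≤ ‖S x‖ * ‖x‖ := (RCLike.re_le_norm _).trans (norm_inner_le_norm _ _)
    nlinarith
  have hclosed : IsClosed (S.range : Set E) := by
    refine (S.antilipschitz_of_bound (K := (A⁻¹).toNNReal) fun x => ?_).isClosed_range
      S.uniformContinuous
    rw [Real.coe_toNNReal _ (inv_pos.2 hA).le, inv_mul_eq_div, le_div_iff₀ hA, mul_comm]
    exact hS x
  have := hclosed.completeSpace_coe
  have hker : S.ker = ⊥ := by
    rw [ker_adjoint_comp_self, LinearMap.ker_eq_bot']
    intro x hx
    have := hT x
    rw [coe_coe] at hx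
    rw [hx, norm_zero, zero_pow two_ne_zero] at this
    simpa using nonpos_of_mul_nonpos_right this hA
  have hrange : S.range = ⊤ := by
    rw [← Submodule.orthogonal_eq_bot_iff, orthogonal_range, adjoint_comp, adjoint_adjoint, hker]
  intro y
  obtain ⟨x, rfl⟩ : y ∈ S.range := hrange ▸ Submodule.mem_top
  exact ⟨T x, rfl⟩

theorem exists_mul_norm_sq_le_of_surjective_adjoint {T : E →L[𝕜] F}
    (hT : Function.Surjective (adjoint T)) : ∃ A > 0, ∀ x, A * ‖x‖ ^ 2 ≤ ‖T x‖ ^ 2 := by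
  obtain ⟨c, hc, hpre⟩ := (adjoint T).exists_preimage_norm_le hT
  refine ⟨(c ^ 2)⁻¹, by positivity, fun x => ?_⟩
  obtain ⟨y, rfl, hy⟩ := hpre x
  have hle : ‖adjoint T y‖ ≤ c * ‖T (adjoint T y)‖ := by
    rcases (norm_nonneg (adjoint T y)).eq_or_lt with hx | hx
    · rw [← hx]; positivity
    have : ‖adjoint T y‖ ^ 2 ≤ c * ‖adjoint T y‖ * ‖T (adjoint T y)‖ := calc
      ‖adjoint T y‖ ^ 2 = RCLike.re (inner 𝕜 y (T (adjoint T y))) := by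
        rw [← adjoint_inner_left, inner_self_eq_norm_sq]
      _ ≤ ‖y‖ * ‖T (adjoint T y)‖ := (RCLike.re_le_norm _).trans (norm_inner_le_norm _ _)
      _ ≤ c * ‖adjoint T y‖ * ‖T (adjoint T y)‖ := by gcongr
    nlinarith
  rw [inv_mul_le_iff₀ (by positivity), ← mul_pow]
  exact pow_le_pow_left₀ (norm_nonneg _) hle 2

theorem surjective_adjoint_iff_exists_mul_norm_sq_le (T : E →L[𝕜] F) :
    Function.Surjective (adjoint T) ↔ ∃ A > 0, ∀ x, A * ‖x‖ ^ 2 ≤ ‖T x‖ ^ 2 :=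
  ⟨exists_mul_norm_sq_le_of_surjective_adjoint, fun ⟨_, hA, hT⟩ =>
    surjective_adjoint_of_mul_norm_sq_le hA hT⟩

end ContinuousLinearMap

theorem stmt_2_general {H : Type*} [NormedAddCommGroup H] [InnerProductSpace ℂ H] [CompleteSpace H]
    {ι : Type*} (v : ι → ℝ) (sq : ι → H →L[ℂ] H) (B : ℝ) (hB : 0 < B) :
    (∃ A : ℝ, 0 < A ∧ A ≤ B ∧ ∀ f : H,
        Summable (fun i => v i ^ 2 * ‖sq i f‖ ^ 2) ∧
        A * ‖f‖ ^ 2 ≤ ∑' i, v i ^ 2 * ‖sq i f‖ ^ 2 ∧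
        (∑' i, v i ^ 2 * ‖sq i f‖ ^ 2) ≤ B * ‖f‖ ^ 2) ↔
    (∃ T : H →L[ℂ] lp (fun _ : ι => H) 2,
        (∀ (f : H) (i : ι), (T f : ∀ _ : ι, H) i = v i • sq i f) ∧
        ‖T‖ ≤ Real.sqrt B ∧
        Function.Surjective (ContinuousLinearMap.adjoint T)) := by
  have hsmul (i : ι) (f : H) : ‖v i • sq i f‖ ^ 2 = v i ^ 2 * ‖sq i f‖ ^ 2 := by
    rw [norm_smul, mul_pow, Real.norm_eq_abs, sq_abs]
  have hnorm (T : H →L[ℂ] lp (fun _ : ι => H) 2) (hT : ∀ f i, T f i = v i • sq i f) (f : H) :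
      ‖T f‖ ^ 2 = ∑' i, v i ^ 2 * ‖sq i f‖ ^ 2 := by
    simp only [lp.norm_sq_eq_tsum_norm_sq, hT, hsmul]
  constructor
  · rintro ⟨A, hA, -, hframe⟩
    obtain ⟨T, hT, hTB⟩ := exists_lp_two_apply_eq_of_tsum_norm_sq_le (fun i => v i • sq i) B
      (fun f => by simpa only [smul_apply, hsmul] using (hframe f).1)
      (fun f => by simpa only [smul_apply, hsmul] using (hframe f).2.2)
    refine ⟨T, hT, hTB, T.surjective_adjoint_iff_exists_mul_norm_sq_le.2 ⟨A, hA, fun f => ?_⟩⟩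
    exact hnorm T hT f ▸ (hframe f).2.1
  · rintro ⟨T, hT, hTB, hsurj⟩
    obtain ⟨A, hA, hlow⟩ := T.surjective_adjoint_iff_exists_mul_norm_sq_le.1 hsurj
    refine ⟨min A B, lt_min hA hB, min_le_right A B, fun f => ⟨?_, ?_, ?_⟩⟩
    · simpa only [hT, hsmul] using lp.summable_norm_sq (T f)
    · rw [← hnorm T hT]
      exact (mul_le_mul_of_nonneg_right (min_le_left A B) (sq_nonneg _)).trans (hlow f)
    · rw [← hnorm T hT, ← Real.sq_sqrt hB.le, ← mul_pow]
      exact pow_le_pow_left₀ (norm_nonneg _) (T.le_of_opNorm_le hTB f) 2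

/-- `{(W i, v i)}` is a `(C,C')`-controlled fusion frame with some lower bound
`A > 0` and upper bound `B` iff the controlled analysis operator
`T f = (v i • (C* π_{W i} C')^{1/2} f)_i` is a well-defined bounded operator `H → ℓ²(ι, H)` with
`‖T‖ ≤ √B` whose adjoint (the controlled synthesis operator) is surjective. -/
theorem stmt_2 {H : Type*} [NormedAddCommGroup H] [InnerProductSpace ℂ H] [CompleteSpace H]
    {ι : Type*} [Countable ι]
    (C C' : H →L[ℂ] H) (hC : IsUnit C) (hC' : IsUnit C')
    (W : ι → Submodule ℂ H) [∀ i, CompleteSpace (W i)]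
    (v : ι → ℝ) (hv : ∀ i, 0 < v i)
    (sq : ι → H →L[ℂ] H)
    (hGpos : ∀ i, (ctrlOp C C' (W i)).IsPositive)
    (hsq_pos : ∀ i, (sq i).IsPositive)
    (hsq_sq : ∀ i, sq i ∘L sq i = ctrlOp C C' (W i))
    (B : ℝ) (hB : 0 < B) :
    (∃ A : ℝ, 0 < A ∧ A ≤ B ∧ ∀ f : H,
        Summable (fun i => v i ^ 2 * ‖sq i f‖ ^ 2) ∧
        A * ‖f‖ ^ 2 ≤ ∑' i, v i ^ 2 * ‖sq i f‖ ^ 2 ∧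
        (∑' i, v i ^ 2 * ‖sq i f‖ ^ 2) ≤ B * ‖f‖ ^ 2) ↔
    (∃ T : H →L[ℂ] lp (fun _ : ι => H) 2,
        (∀ (f : H) (i : ι), (T f : ∀ _ : ι, H) i = v i • sq i f) ∧
        ‖T‖ ≤ Real.sqrt B ∧
        Function.Surjective (ContinuousLinearMap.adjoint T)) :=
  stmt_2_general v sq B hB
end

section
/- Let W = {(W_i, v_i)}_{i∈I} be a (C,C')-controlled fusion frame for H with bounds A and B, and let J ⊆ I. If Σ_{i∈J} v_i² > B, then ⋂_{i∈J} M_i = {0}, where M_i = {f ∈ H : (C*π_{W_i}C')^{1/2} f = f}. -/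
/-! If `f ≠ 0` is fixed by every `(C* π_{W i} C')^{1/2}` with `i ∈ J`, then the frame sum at `f`
is at least `(∑_{i ∈ J} v i ^ 2) ‖f‖²`, while the upper frame bound caps it by `B ‖f‖²`; dividing
by `‖f‖²` gives `∑_{i ∈ J} v i ^ 2 ≤ B`. The sum over `J` is taken in `ℝ≥0∞`, so no
summability of the weights over `J` needs to be known in advance. -/

open ContinuousLinearMap

theorem ENNReal.tsum_subtype_ofReal_le_ofReal_tsum {ι : Type*} {g : ι → ℝ}
    (hg : ∀ i, 0 ≤ g i) (hs : Summable g) (J : Set ι) :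
    ∑' i : J, ENNReal.ofReal (g i) ≤ ENNReal.ofReal (∑' i, g i) :=
  ENNReal.ofReal_tsum_of_nonneg hg hs ▸
    ENNReal.tsum_comp_le_tsum_of_injective Subtype.coe_injective _

theorem ofReal_sq_norm_mul_tsum_subtype_le {ι E : Type*} [SeminormedAddCommGroup E]
    {w : ι → ℝ} (hw : ∀ i, 0 ≤ w i) {x : ι → E} (hs : Summable fun i => w i * ‖x i‖ ^ 2)
    {J : Set ι} {f : E} (hx : ∀ i ∈ J, x i = f) :
    ENNReal.ofReal (‖f‖ ^ 2) * ∑' i : J, ENNReal.ofReal (w i) ≤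
      ENNReal.ofReal (∑' i, w i * ‖x i‖ ^ 2) := by
  calc ENNReal.ofReal (‖f‖ ^ 2) * ∑' i : J, ENNReal.ofReal (w i)
      = ∑' i : J, ENNReal.ofReal (w i * ‖x i‖ ^ 2) := by
        rw [← ENNReal.tsum_mul_left]
        refine tsum_congr fun i => ?_
        rw [hx i i.2, ENNReal.ofReal_mul (hw i), mul_comm]
    _ ≤ ENNReal.ofReal (∑' i, w i * ‖x i‖ ^ 2) :=
        ENNReal.tsum_subtype_ofReal_le_ofReal_tsum (fun i => by have := hw i; positivity) hs J

theorem stmt_4_general {H : Type*} [NormedAddCommGroup H] [InnerProductSpace ℂ H]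
    {ι : Type*}
    (v : ι → ℝ)
    (sq : ι → H →L[ℂ] H)
    (A B : ℝ)
    (hframe : ∀ f : H,
      Summable (fun i => v i ^ 2 * ‖sq i f‖ ^ 2) ∧
      A * ‖f‖ ^ 2 ≤ ∑' i, v i ^ 2 * ‖sq i f‖ ^ 2 ∧
      (∑' i, v i ^ 2 * ‖sq i f‖ ^ 2) ≤ B * ‖f‖ ^ 2)
    (J : Set ι)
    (hJ : ENNReal.ofReal B < ∑' i : J, ENNReal.ofReal (v i ^ 2)) :
    ∀ f : H, (∀ i ∈ J, sq i f = f) → f = 0 := by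
  intro f hf
  by_contra hf0
  obtain ⟨hsum, -, hupper⟩ := hframe f
  have hnorm : ENNReal.ofReal (‖f‖ ^ 2) ≠ 0 := by
    simpa using hf0
  have hbound : ENNReal.ofReal (‖f‖ ^ 2) * ∑' i : J, ENNReal.ofReal (v i ^ 2) ≤
      ENNReal.ofReal (‖f‖ ^ 2) * ENNReal.ofReal B := by
    rw [← ENNReal.ofReal_mul (by positivity), mul_comm (‖f‖ ^ 2)]
    exact (ofReal_sq_norm_mul_tsum_subtype_le (fun i => sq_nonneg (v i)) hsum hf).trans
      (ENNReal.ofReal_le_ofReal hupper)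
  exact hJ.not_ge ((ENNReal.mul_le_mul_iff_right hnorm ENNReal.ofReal_ne_top).mp hbound)

/-- If `{(W i, v i)}` is a `(C,C')`-controlled fusion frame with bounds `A, B`
and `J ⊆ I` satisfies `∑_{i ∈ J} v i ^ 2 > B`, then
`⋂_{i ∈ J} {f : (C* π_{W i} C')^{1/2} f = f} = {0}`. -/
theorem stmt_4 {H : Type*} [NormedAddCommGroup H] [InnerProductSpace ℂ H] [CompleteSpace H]
    {ι : Type*} [Countable ι]
    (C C' : H →L[ℂ] H) (hC : IsUnit C) (hC' : IsUnit C')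
    (W : ι → Submodule ℂ H) [∀ i, CompleteSpace (W i)]
    (v : ι → ℝ) (hv : ∀ i, 0 < v i)
    (sq : ι → H →L[ℂ] H)
    (hGpos : ∀ i, (ctrlOp C C' (W i)).IsPositive)
    (hsq_pos : ∀ i, (sq i).IsPositive)
    (hsq_sq : ∀ i, sq i ∘L sq i = ctrlOp C C' (W i))
    (A B : ℝ) (hA : 0 < A) (hAB : A ≤ B)
    (hframe : ∀ f : H,
      Summable (fun i => v i ^ 2 * ‖sq i f‖ ^ 2) ∧
      A * ‖f‖ ^ 2 ≤ ∑' i, v i ^ 2 * ‖sq i f‖ ^ 2 ∧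
      (∑' i, v i ^ 2 * ‖sq i f‖ ^ 2) ≤ B * ‖f‖ ^ 2)
    (J : Set ι)
    (hJ : ENNReal.ofReal B < ∑' i : J, ENNReal.ofReal (v i ^ 2)) :
    ∀ f : H, (∀ i ∈ J, sq i f = f) → f = 0 :=
  stmt_4_general v sq A B hframe J hJ
end

section
/- Let W = {(W_i, v_i)}_{i∈I} be a (C,C')-controlled fusion frame for H with bounds A and B, and let J ⊆ I. If α := Σ_{i∈J} v_i² ‖C*π_{W_i}C'‖ < A, then the reduced family {(W_i, v_i)}_{i∈I∖J} is a (C,C')-controlled fusion frame for H with bounds A − α and B. -/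
/-!
If `S` is a self-adjoint square root of `T = C* π_W C'`, the C⋆-identity `‖S‖² = ‖S ∘ S‖` gives
`‖S f‖² ≤ ‖T‖ ‖f‖²`. Hence the terms indexed by `J` contribute at most `α ‖f‖²` to the frame sum,
and the sum over `I ∖ J` lies between the full sum minus `α ‖f‖²` and the full sum.
-/

open ContinuousLinearMap

theorem IsSelfAdjoint.norm_apply_sq_le_of_comp_self_eq {𝕜 E : Type*} [RCLike 𝕜]
    [NormedAddCommGroup E] [InnerProductSpace 𝕜 E] [CompleteSpace E] {S T : E →L[𝕜] E}
    (hS : IsSelfAdjoint S) (hST : S ∘L S = T) (x : E) : ‖S x‖ ^ 2 ≤ ‖T‖ * ‖x‖ ^ 2 := by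
  have hT : ‖T‖ = ‖S‖ ^ 2 := by rw [← hST, ← hS.norm_mul_self]; rfl
  calc ‖S x‖ ^ 2 ≤ (‖S‖ * ‖x‖) ^ 2 := by gcongr; exact S.le_opNorm x
    _ = ‖T‖ * ‖x‖ ^ 2 := by rw [hT, mul_pow]

theorem Summable.tsum_sub_le_tsum_compl {ι : Type*} {g : ι → ℝ} (hg : Summable g) {J : Set ι}
    {β : ℝ} (hJ : ∑' i : J, g i ≤ β) : ∑' i, g i - β ≤ ∑' i : ↥Jᶜ, g i := by
  have := (hg.subtype (· ∈ J)).tsum_add_tsum_compl (hg.subtype (· ∈ Jᶜ))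
  linarith

theorem stmt_6_general {H : Type*} [NormedAddCommGroup H] [InnerProductSpace ℂ H] [CompleteSpace H]
    {ι : Type*}
    (C C' : H →L[ℂ] H)
    (W : ι → Submodule ℂ H) [∀ i, CompleteSpace (W i)]
    (v : ι → ℝ)
    (sq : ι → H →L[ℂ] H)
    (hsq_pos : ∀ i, (sq i).IsPositive)
    (hsq_sq : ∀ i, sq i ∘L sq i = ctrlOp C C' (W i))
    (A B : ℝ)
    (hframe : ∀ f : H,
      Summable (fun i => v i ^ 2 * ‖sq i f‖ ^ 2) ∧
      A * ‖f‖ ^ 2 ≤ ∑' i, v i ^ 2 * ‖sq i f‖ ^ 2 ∧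
      (∑' i, v i ^ 2 * ‖sq i f‖ ^ 2) ≤ B * ‖f‖ ^ 2)
    (J : Set ι) (α : ℝ)
    (hαsum : HasSum (fun i : J => v i ^ 2 * ‖ctrlOp C C' (W i)‖) α) :
    ∀ f : H,
      Summable (fun i : ↥Jᶜ => v i ^ 2 * ‖sq i f‖ ^ 2) ∧
      (A - α) * ‖f‖ ^ 2 ≤ ∑' i : ↥Jᶜ, v i ^ 2 * ‖sq i f‖ ^ 2 ∧
      (∑' i : ↥Jᶜ, v i ^ 2 * ‖sq i f‖ ^ 2) ≤ B * ‖f‖ ^ 2 := by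
  intro f
  obtain ⟨hsum, hlower, hupper⟩ := hframe f
  have hJ : ∑' i : J, v i ^ 2 * ‖sq i f‖ ^ 2 ≤ α * ‖f‖ ^ 2 := by
    have hαf := hαsum.mul_right (‖f‖ ^ 2)
    refine ((hsum.subtype (· ∈ J)).tsum_le_tsum (fun i => ?_) hαf.summable).trans_eq hαf.tsum_eq
    have hi := (hsq_pos i).isSelfAdjoint.norm_apply_sq_le_of_comp_self_eq (hsq_sq i) f
    rw [mul_assoc]
    exact mul_le_mul_of_nonneg_left hi (sq_nonneg _)
  refine ⟨hsum.subtype _, ?_, ?_⟩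
  · linarith [hsum.tsum_sub_le_tsum_compl hJ]
  · exact (hsum.tsum_subtype_le _ Jᶜ (fun i => by positivity)).trans hupper

/-- If `{(W i, v i)}` is a `(C,C')`-controlled fusion frame with bounds `A, B`
and `J ⊆ I` satisfies `α := ∑_{i ∈ J} v i ^ 2 * ‖C* π_{W i} C'‖ < A`, then
`{(W i, v i)}_{i ∈ I \ J}` is a `(C,C')`-controlled fusion frame with bounds `A - α` and `B`. -/
theorem stmt_6 {H : Type*} [NormedAddCommGroup H] [InnerProductSpace ℂ H] [CompleteSpace H]
    {ι : Type*} [Countable ι]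
    (C C' : H →L[ℂ] H) (hC : IsUnit C) (hC' : IsUnit C')
    (W : ι → Submodule ℂ H) [∀ i, CompleteSpace (W i)]
    (v : ι → ℝ) (hv : ∀ i, 0 < v i)
    (sq : ι → H →L[ℂ] H)
    (hGpos : ∀ i, (ctrlOp C C' (W i)).IsPositive)
    (hsq_pos : ∀ i, (sq i).IsPositive)
    (hsq_sq : ∀ i, sq i ∘L sq i = ctrlOp C C' (W i))
    (A B : ℝ) (hA : 0 < A) (hAB : A ≤ B)
    (hframe : ∀ f : H,
      Summable (fun i => v i ^ 2 * ‖sq i f‖ ^ 2) ∧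
      A * ‖f‖ ^ 2 ≤ ∑' i, v i ^ 2 * ‖sq i f‖ ^ 2 ∧
      (∑' i, v i ^ 2 * ‖sq i f‖ ^ 2) ≤ B * ‖f‖ ^ 2)
    (J : Set ι) (α : ℝ)
    (hαsum : HasSum (fun i : J => v i ^ 2 * ‖ctrlOp C C' (W i)‖) α)
    (hα : α < A) :
    ∀ f : H,
      Summable (fun i : ↥Jᶜ => v i ^ 2 * ‖sq i f‖ ^ 2) ∧
      (A - α) * ‖f‖ ^ 2 ≤ ∑' i : ↥Jᶜ, v i ^ 2 * ‖sq i f‖ ^ 2 ∧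
      (∑' i : ↥Jᶜ, v i ^ 2 * ‖sq i f‖ ^ 2) ≤ B * ‖f‖ ^ 2 :=
  stmt_6_general C C' W v sq hsq_pos hsq_sq A B hframe J α hαsum
end

section
/- Suppose there exists A₂ > 0 such that for every finitely supported sequence (f_i)_{i∈I} of elements of H one has ‖Σ_{i∈I} v_i (C*π_{Z_i}C')^{1/2} f_i‖² ≤ A₂ Σ_{i∈I} ‖f_i‖². Then Σ_{i∈I} v_i² ‖(C*π_{Z_i}C')^{1/2} f‖² ≤ A₂‖f‖² for every f ∈ H. -/
/-! Duality (`T T*` argument): put `g i = v i • T i f` and `S = ∑ v i ^ 2 ‖T i f‖ ^ 2`. By symmetry of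
the `T i`, `S = re ⟪f, ∑ v i • T i (g i)⟫ ≤ ‖f‖ ‖∑ v i • T i (g i)‖`, while the hypothesis bounds the
square of the last norm by `A * ∑ ‖g i‖ ^ 2 = A * S`. Hence `S ^ 2 ≤ A ‖f‖ ^ 2 S`, i.e. `S ≤ A ‖f‖ ^ 2`. -/

open ContinuousLinearMap

open scoped InnerProductSpace

theorem le_mul_sq_of_le_mul_of_sq_le_mul {S a t A : ℝ} (hA : 0 ≤ A) (hS : 0 ≤ S)
    (h₁ : S ≤ a * t) (h₂ : t ^ 2 ≤ A * S) : S ≤ A * a ^ 2 := by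
  rcases hS.eq_or_lt with rfl | hS
  · positivity
  refine le_of_mul_le_mul_right ?_ hS
  calc S * S ≤ (a * t) * (a * t) := mul_self_le_mul_self hS.le h₁
    _ = a ^ 2 * t ^ 2 := by ring
    _ ≤ a ^ 2 * (A * S) := by gcongr
    _ = A * a ^ 2 * S := by ring

section

variable {𝕜 E ι : Type*} [RCLike 𝕜] [NormedAddCommGroup E] [InnerProductSpace 𝕜 E]
  [NormedSpace ℝ E] [IsScalarTower ℝ 𝕜 E] {T : ι → E →L[𝕜] E} {v : ι → ℝ}

theorem inner_sum_smul_apply_smul_apply (hT : ∀ i, (T i : E →ₗ[𝕜] E).IsSymmetric)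
    (s : Finset ι) (f : E) :
    ⟪f, ∑ i ∈ s, v i • T i (v i • T i f)⟫_𝕜 = ((∑ i ∈ s, v i ^ 2 * ‖T i f‖ ^ 2 : ℝ) : 𝕜) := by
  rw [inner_sum, RCLike.ofReal_sum]
  refine Finset.sum_congr rfl fun i _ => ?_
  have hsymm : ⟪f, T i (T i f)⟫_𝕜 = ⟪T i f, T i f⟫_𝕜 := (hT i f (T i f)).symm
  simp only [RCLike.real_smul_eq_coe_smul (K := 𝕜), map_smul, inner_smul_real_right, hsymm,
    inner_self_eq_norm_sq_to_K]
  push_cast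
  ring

variable (hT : ∀ i, (T i : E →ₗ[𝕜] E).IsSymmetric) {A : ℝ} (hA : 0 ≤ A)
  (hsyn : ∀ (s : Finset ι) (g : ι → E),
    ‖∑ i ∈ s, v i • T i (g i)‖ ^ 2 ≤ A * ∑ i ∈ s, ‖g i‖ ^ 2)
include hT hA hsyn

theorem sum_sq_norm_le_of_norm_sum_sq_le (f : E) (s : Finset ι) :
    ∑ i ∈ s, v i ^ 2 * ‖T i f‖ ^ 2 ≤ A * ‖f‖ ^ 2 := by
  set g : ι → E := fun i => v i • T i f
  have hinner : RCLike.re ⟪f, ∑ i ∈ s, v i • T i (g i)⟫_𝕜 = ∑ i ∈ s, v i ^ 2 * ‖T i f‖ ^ 2 := by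
    rw [inner_sum_smul_apply_smul_apply hT, RCLike.ofReal_re]
  have hg : ∑ i ∈ s, ‖g i‖ ^ 2 = ∑ i ∈ s, v i ^ 2 * ‖T i f‖ ^ 2 := by
    simp only [g, norm_smul, mul_pow, Real.norm_eq_abs, sq_abs]
  refine le_mul_sq_of_le_mul_of_sq_le_mul hA (by positivity) ?_ (hg ▸ hsyn s g)
  exact hinner ▸ re_inner_le_norm f _

theorem summable_sq_norm_and_tsum_le_of_norm_sum_sq_le (f : E) :
    Summable (fun i => v i ^ 2 * ‖T i f‖ ^ 2) ∧
      ∑' i, v i ^ 2 * ‖T i f‖ ^ 2 ≤ A * ‖f‖ ^ 2 := by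
  have hfin := sum_sq_norm_le_of_norm_sum_sq_le hT hA hsyn f
  have hsum := summable_of_sum_le (fun i => by positivity) hfin
  exact ⟨hsum, hsum.tsum_le_of_sum_le hfin⟩

end

theorem stmt_14_general {H : Type*} [NormedAddCommGroup H] [InnerProductSpace ℂ H]
    {ι : Type*}
    (v : ι → ℝ)
    (sq : ι → H →L[ℂ] H)
    (hsq_pos : ∀ i, (sq i).IsPositive)
    (A₂ : ℝ) (hA₂ : 0 < A₂)
    (hII : ∀ (s : Finset ι) (g : ι → H),
      ‖∑ i ∈ s, v i • sq i (g i)‖ ^ 2 ≤ A₂ * ∑ i ∈ s, ‖g i‖ ^ 2) :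
    ∀ f : H, Summable (fun i => v i ^ 2 * ‖sq i f‖ ^ 2) ∧
      (∑' i, v i ^ 2 * ‖sq i f‖ ^ 2) ≤ A₂ * ‖f‖ ^ 2 :=
  summable_sq_norm_and_tsum_le_of_norm_sum_sq_le (fun i => (hsq_pos i).isSymmetric) hA₂.le hII

/-- If `‖∑ i, v i • (C* π_{Z i} C')^{1/2} (f_i)‖ ^ 2 ≤ A₂ * ∑ i, ‖f_i‖ ^ 2`
for every finitely supported sequence `(f_i)`, then
`∑ i, v i ^ 2 * ‖(C* π_{Z i} C')^{1/2} f‖ ^ 2 ≤ A₂ ‖f‖ ^ 2` for every `f ∈ H`. -/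
theorem stmt_14 {H : Type*} [NormedAddCommGroup H] [InnerProductSpace ℂ H] [CompleteSpace H]
    {ι : Type*} [Countable ι]
    (C C' : H →L[ℂ] H) (hC : IsUnit C) (hC' : IsUnit C')
    (Z : ι → Submodule ℂ H) [∀ i, CompleteSpace (Z i)]
    (v : ι → ℝ) (hv : ∀ i, 0 < v i)
    (sq : ι → H →L[ℂ] H)
    (hGpos : ∀ i, (ctrlOp C C' (Z i)).IsPositive)
    (hsq_pos : ∀ i, (sq i).IsPositive)
    (hsq_sq : ∀ i, sq i ∘L sq i = ctrlOp C C' (Z i))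
    (A₂ : ℝ) (hA₂ : 0 < A₂)
    (hII : ∀ (s : Finset ι) (g : ι → H),
      ‖∑ i ∈ s, v i • sq i (g i)‖ ^ 2 ≤ A₂ * ∑ i ∈ s, ‖g i‖ ^ 2) :
    ∀ f : H, Summable (fun i => v i ^ 2 * ‖sq i f‖ ^ 2) ∧
      (∑' i, v i ^ 2 * ‖sq i f‖ ^ 2) ≤ A₂ * ‖f‖ ^ 2 :=
  stmt_14_general v sq hsq_pos A₂ hA₂ hII
end

section
/- Suppose A₁, A₂ > 0 satisfy: (I) Σ_{i∈I} v_i² ‖(C*π_{W_i}C')^{1/2} f‖² ≤ A₁‖f‖² for all f ∈ H, and (II) ‖Σ_{i∈I} v_i (C*π_{Z_i}C')^{1/2} f_i‖² ≤ A₂ Σ_{i∈I} ‖f_i‖² for every (f_i)_{i∈I} ∈ ℓ²(I,H). Then the CC'-approximation operator Φf := Σ_{i∈I} v_i² (C*π_{Z_i}C')^{1/2} (C*π_{W_i}C')^{1/2} f is well defined (the series converges for every f ∈ H) and bounded with ‖Φf‖² ≤ A₁A₂‖f‖² for all f. If moreover 0 ≤ γ < 1 and ‖f − Φf‖ ≤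 γ‖f‖ for all f ∈ H, then Φ is invertible and ‖Φ⁻¹‖ ≤ (1−γ)⁻¹. -/
/-!
Write `Φ f = ∑ v i • sqZ i (v i • sqW i f)` as synthesis after analysis: by (I) the coefficient
sequence `(v i • sqW i f)` lies in `ℓ²` with squared norm at most `A₁ ‖f‖²`, and by (II) its
synthesis converges with squared norm at most `A₂` times that. So `Φ` is a bounded operator.
The hypothesis `‖f - Φ f‖ ≤ γ ‖f‖` says `‖1 - Φ‖ ≤ γ < 1`, hence `Φ = 1 - (1 - Φ)` is inverted
by the Neumann series `∑ (1 - Φ) ^ n`, of norm at most `(1 - γ)⁻¹`.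
-/

open ContinuousLinearMap

theorem le_sqrt_mul_of_sq_le_mul_sq {a b M : ℝ} (hb : 0 ≤ b) (h : a ^ 2 ≤ M * b ^ 2) :
    a ≤ √M * b :=
  calc a ≤ √(a ^ 2) := (le_abs_self a).trans (Real.sqrt_sq_eq_abs a).ge
    _ ≤ √(M * b ^ 2) := Real.sqrt_le_sqrt h
    _ = √M * b := by rw [Real.sqrt_mul' M (sq_nonneg b), Real.sqrt_sq hb]

theorem summable_and_sq_norm_tsum_le_of_lp_bound {ι E F : Type*} [NormedAddCommGroup E]
    [NormedAddCommGroup F] (T : ι → E → F) {A B : ℝ} (hA : 0 ≤ A)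
    (hT : ∀ g : lp (fun _ : ι => E) 2,
      Summable (fun i => T i (g i)) ∧ ‖∑' i, T i (g i)‖ ^ 2 ≤ A * ∑' i, ‖g i‖ ^ 2)
    {x : ι → E} (hx : Summable fun i => ‖x i‖ ^ 2) (hxB : ∑' i, ‖x i‖ ^ 2 ≤ B) :
    Summable (fun i => T i (x i)) ∧ ‖∑' i, T i (x i)‖ ^ 2 ≤ A * B := by
  obtain ⟨hs, hb⟩ := hT ⟨x, memℓp_gen (by simpa using hx)⟩
  exact ⟨hs, hb.trans (mul_le_mul_of_nonneg_left hxB hA)⟩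

section Operators

variable {𝕜 ι E F : Type*} [NontriviallyNormedField 𝕜] [NormedAddCommGroup E] [NormedSpace 𝕜 E]
  [NormedAddCommGroup F] [NormedSpace 𝕜 F]

theorem ContinuousLinearMap.exists_apply_eq_tsum (T : ι → E →L[𝕜] F)
    (hT : ∀ x, Summable fun i => T i x) {M : ℝ} (hM : ∀ x, ‖∑' i, T i x‖ ^ 2 ≤ M * ‖x‖ ^ 2) :
    ∃ L : E →L[𝕜] F, ∀ x, L x = ∑' i, T i x := by
  let L : E →ₗ[𝕜] F :=
    { toFun := fun x => ∑' i, T i x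
      map_add' := fun x y => by simp only [map_add, (hT x).tsum_add (hT y)]
      map_smul' := fun c x => by simp only [map_smul, (hT x).tsum_const_smul c, RingHom.id_apply] }
  exact ⟨L.mkContinuous √M fun x => le_sqrt_mul_of_sq_le_mul_sq (norm_nonneg x) (hM x),
    fun _ => rfl⟩

theorem ContinuousLinearMap.exists_continuousLinearEquiv_of_norm_sub_apply_le [CompleteSpace E]
    (T : E →L[𝕜] E) {γ : ℝ} (hγ0 : 0 ≤ γ) (hγ1 : γ < 1) (h : ∀ x, ‖x - T x‖ ≤ γ * ‖x‖) :
    ∃ Φ : E ≃L[𝕜] E, (Φ : E →L[𝕜] E) = T ∧ ‖(Φ.symm : E →L[𝕜] E)‖ ≤ (1 - γ)⁻¹ := by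
  have hγ : ‖1 - T‖ ≤ γ := opNorm_le_bound _ hγ0 h
  let u := Units.oneSub (1 - T) (hγ.trans_lt hγ1)
  refine ⟨ContinuousLinearEquiv.unitsEquiv 𝕜 E u, by ext; simp [u], ?_⟩
  calc ‖∑' n : ℕ, (1 - T) ^ n‖ ≤ ‖(1 : E →L[𝕜] E)‖ - 1 + (1 - ‖1 - T‖)⁻¹ :=
        tsum_geometric_le_of_norm_lt_one _ (hγ.trans_lt hγ1)
    _ ≤ (1 - γ)⁻¹ := by
        have hone : ‖(1 : E →L[𝕜] E)‖ ≤ 1 := norm_id_le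
        linarith [inv_anti₀ (sub_pos.2 hγ1) (sub_le_sub_left hγ 1)]

end Operators

theorem stmt_15_general {H : Type*} [NormedAddCommGroup H] [InnerProductSpace ℂ H] [CompleteSpace H]
    {ι : Type*} (v : ι → ℝ) (sqW sqZ : ι → H →L[ℂ] H)
    (A₁ A₂ γ : ℝ) (hA₂ : 0 < A₂) (hγ0 : 0 ≤ γ) (hγ1 : γ < 1)
    (hI : ∀ f : H, Summable (fun i => v i ^ 2 * ‖sqW i f‖ ^ 2) ∧
      (∑' i, v i ^ 2 * ‖sqW i f‖ ^ 2) ≤ A₁ * ‖f‖ ^ 2)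
    (hII : ∀ g : lp (fun _ : ι => H) 2,
      Summable (fun i => v i • sqZ i (g i)) ∧
      ‖∑' i, v i • sqZ i (g i)‖ ^ 2 ≤ A₂ * ∑' i, ‖g i‖ ^ 2) :
    (∀ f : H, Summable (fun i => (v i ^ 2) • sqZ i (sqW i f))) ∧
    (∀ f : H, ‖∑' i, (v i ^ 2) • sqZ i (sqW i f)‖ ^ 2 ≤ A₁ * A₂ * ‖f‖ ^ 2) ∧
    ((∀ f : H, ‖f - ∑' i, (v i ^ 2) • sqZ i (sqW i f)‖ ≤ γ * ‖f‖) →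
      ∃ Φ : H ≃L[ℂ] H, (∀ f : H, Φ f = ∑' i, (v i ^ 2) • sqZ i (sqW i f)) ∧
        ‖(Φ.symm : H →L[ℂ] H)‖ ≤ (1 - γ)⁻¹) := by
  have hΦ (f : H) : Summable (fun i => (v i ^ 2) • sqZ i (sqW i f)) ∧
      ‖∑' i, (v i ^ 2) • sqZ i (sqW i f)‖ ^ 2 ≤ A₁ * A₂ * ‖f‖ ^ 2 := by
    have hnorm (i : ι) : ‖v i • sqW i f‖ ^ 2 = v i ^ 2 * ‖sqW i f‖ ^ 2 := by
      rw [norm_smul, mul_pow, Real.norm_eq_abs, sq_abs]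
    have hterm (i : ι) : v i • sqZ i (v i • sqW i f) = (v i ^ 2) • sqZ i (sqW i f) := by
      rw [(sqZ i).map_smul_of_tower, smul_smul, sq]
    obtain ⟨hs, hb⟩ : Summable (fun i => v i • sqZ i (v i • sqW i f)) ∧
        ‖∑' i, v i • sqZ i (v i • sqW i f)‖ ^ 2 ≤ A₂ * (A₁ * ‖f‖ ^ 2) :=
      summable_and_sq_norm_tsum_le_of_lp_bound (fun i => (v i • sqZ i ·)) hA₂.le hII
        (by simpa only [hnorm] using (hI f).1) (by simpa only [hnorm] using (hI f).2)
    simp only [hterm] at hs hb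
    exact ⟨hs, hb.trans_eq (by ring)⟩
  refine ⟨fun f => (hΦ f).1, fun f => (hΦ f).2, fun hγ => ?_⟩
  obtain ⟨T, hT⟩ : ∃ T : H →L[ℂ] H, ∀ f, T f = ∑' i, (v i ^ 2) • sqZ i (sqW i f) :=
    exists_apply_eq_tsum (fun i => (v i ^ 2) • (sqZ i ∘L sqW i)) (fun f => (hΦ f).1)
      (fun f => (hΦ f).2)
  obtain ⟨Φ, hΦT, hΦsymm⟩ :=
    T.exists_continuousLinearEquiv_of_norm_sub_apply_le hγ0 hγ1 (by simpa [hT] using hγ)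
  exact ⟨Φ, fun f => by rw [← hT f, ← hΦT, ContinuousLinearEquiv.coe_coe], hΦsymm⟩

/-- Under hypotheses (I) and (II), the `CC'`-approximation operator
`Φ f = ∑ i, v i ^ 2 • (C* π_{Z i} C')^{1/2} ((C* π_{W i} C')^{1/2} f)` is well defined
(the series converges for every `f`) and bounded with `‖Φ f‖ ^ 2 ≤ A₁ * A₂ * ‖f‖ ^ 2`; if
moreover `0 ≤ γ < 1` and `‖f - Φ f‖ ≤ γ ‖f‖` for all `f`, then `Φ` is invertible with
`‖Φ⁻¹‖ ≤ (1 - γ)⁻¹`. -/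
theorem stmt_15 {H : Type*} [NormedAddCommGroup H] [InnerProductSpace ℂ H] [CompleteSpace H]
    {ι : Type*} [Countable ι]
    (C C' : H →L[ℂ] H) (hC : IsUnit C) (hC' : IsUnit C')
    (W Z : ι → Submodule ℂ H) [∀ i, CompleteSpace (W i)] [∀ i, CompleteSpace (Z i)]
    (v : ι → ℝ) (hv : ∀ i, 0 < v i)
    (sqW sqZ : ι → H →L[ℂ] H)
    (hGWpos : ∀ i, (ctrlOp C C' (W i)).IsPositive)
    (hGZpos : ∀ i, (ctrlOp C C' (Z i)).IsPositive)
    (hsqW_pos : ∀ i, (sqW i).IsPositive)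
    (hsqZ_pos : ∀ i, (sqZ i).IsPositive)
    (hsqW_sq : ∀ i, sqW i ∘L sqW i = ctrlOp C C' (W i))
    (hsqZ_sq : ∀ i, sqZ i ∘L sqZ i = ctrlOp C C' (Z i))
    (A₁ A₂ γ : ℝ) (hA₁ : 0 < A₁) (hA₂ : 0 < A₂) (hγ0 : 0 ≤ γ) (hγ1 : γ < 1)
    (hI : ∀ f : H, Summable (fun i => v i ^ 2 * ‖sqW i f‖ ^ 2) ∧
      (∑' i, v i ^ 2 * ‖sqW i f‖ ^ 2) ≤ A₁ * ‖f‖ ^ 2)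
    (hII : ∀ g : lp (fun _ : ι => H) 2,
      Summable (fun i => v i • sqZ i (g i)) ∧
      ‖∑' i, v i • sqZ i (g i)‖ ^ 2 ≤ A₂ * ∑' i, ‖g i‖ ^ 2) :
    (∀ f : H, Summable (fun i => (v i ^ 2) • sqZ i (sqW i f))) ∧
    (∀ f : H, ‖∑' i, (v i ^ 2) • sqZ i (sqW i f)‖ ^ 2 ≤ A₁ * A₂ * ‖f‖ ^ 2) ∧
    ((∀ f : H, ‖f - ∑' i, (v i ^ 2) • sqZ i (sqW i f)‖ ≤ γ * ‖f‖) →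
      ∃ Φ : H ≃L[ℂ] H, (∀ f : H, Φ f = ∑' i, (v i ^ 2) • sqZ i (sqW i f)) ∧
        ‖(Φ.symm : H →L[ℂ] H)‖ ≤ (1 - γ)⁻¹) :=
  stmt_15_general v sqW sqZ A₁ A₂ γ hA₂ hγ0 hγ1 hI hII
end

section
/- Let W = {(W_i, v_i)}_{i∈I} be a (C,C')-controlled fusion frame for H with bounds A and B. Then for every f ∈ H the series S_W f := Σ_{i∈I} v_i² C*π_{W_i}C' f converges in H, and S_W is a bounded, self-adjoint, positive, invertible linear operator on H satisfying A‖f‖² ≤ ⟨S_W f, f⟩ ≤ B‖f‖² for all f ∈ H (i.e., A·Id ≤ S_W ≤ B·Id). -/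
open ContinuousLinearMap

/-!
Put `R i = v i • sq i`. As `sq i` is self-adjoint with square `C* π_{W i} C'`, we have
`v i ^ 2 • C* π_{W i} C' = (R i)† R i`, and the frame condition reads
`A ‖f‖² ≤ ∑ ‖R i f‖² ≤ B ‖f‖²`. For a finite set `t` of indices, pairing
`g = ∑_{i ∈ t} (R i)† R i f` with itself and applying Cauchy–Schwarz twice gives
`‖g‖² ≤ B ∑_{i ∈ t} ‖R i f‖²`, so the partial sums are Cauchy and their limit `S f` satisfies
`‖S f‖ ≤ B ‖f‖`. Since `⟪S f, g⟫ = ∑ ⟪R i f, R i g⟫`, the operator `S` is self-adjoint and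
`re ⟪S f, f⟫` is the frame sum; the lower frame bound makes `S` coercive, hence invertible.
-/

open scoped InnerProductSpace

namespace ContinuousLinearMap

variable {𝕜 E F ι : Type*} [RCLike 𝕜]
  [NormedAddCommGroup E] [InnerProductSpace 𝕜 E] [CompleteSpace E]
  [NormedAddCommGroup F] [InnerProductSpace 𝕜 F] [CompleteSpace F]
  {R : ι → E →L[𝕜] F} {B : ℝ}

theorem norm_inner_sum_adjoint_apply_apply_le (R : ι → E →L[𝕜] F) (t : Finset ι) (f g : E) :
    ‖⟪∑ i ∈ t, adjoint (R i) (R i f), g⟫_𝕜‖ ≤ ∑ i ∈ t, ‖R i f‖ * ‖R i g‖ := by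
  rw [sum_inner]
  refine (norm_sum_le _ _).trans (Finset.sum_le_sum fun i _ => ?_)
  rw [adjoint_inner_left]
  exact norm_inner_le_norm _ _

theorem sq_norm_sum_adjoint_apply_apply_le (hsum : ∀ g, Summable fun i => ‖R i g‖ ^ 2)
    (hB : ∀ g, ∑' i, ‖R i g‖ ^ 2 ≤ B * ‖g‖ ^ 2) (hB₀ : 0 ≤ B) (t : Finset ι) (f : E) :
    ‖∑ i ∈ t, adjoint (R i) (R i f)‖ ^ 2 ≤ B * ∑ i ∈ t, ‖R i f‖ ^ 2 := by
  set g := ∑ i ∈ t, adjoint (R i) (R i f)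
  have hCS : (‖g‖ ^ 2) ^ 2 ≤ (∑ i ∈ t, ‖R i f‖ ^ 2) * ∑ i ∈ t, ‖R i g‖ ^ 2 := calc
    (‖g‖ ^ 2) ^ 2 = ‖⟪g, g⟫_𝕜‖ ^ 2 := by
      rw [inner_self_eq_norm_sq_to_K, norm_pow, RCLike.norm_ofReal, abs_norm]
    _ ≤ (∑ i ∈ t, ‖R i f‖ * ‖R i g‖) ^ 2 :=
      pow_le_pow_left₀ (norm_nonneg _) (norm_inner_sum_adjoint_apply_apply_le R t f g) 2
    _ ≤ _ := Finset.sum_mul_sq_le_sq_mul_sq t _ _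
  have hg : ∑ i ∈ t, ‖R i g‖ ^ 2 ≤ B * ‖g‖ ^ 2 :=
    ((hsum g).sum_le_tsum t fun i _ => by positivity).trans (hB g)
  have hX : 0 ≤ ∑ i ∈ t, ‖R i f‖ ^ 2 := by positivity
  rcases (sq_nonneg ‖g‖).eq_or_lt with hg₀ | hg₀
  · rw [← hg₀]
    positivity
  · nlinarith [mul_le_mul_of_nonneg_left hg hX]

theorem norm_sum_adjoint_apply_apply_le (hsum : ∀ g, Summable fun i => ‖R i g‖ ^ 2)
    (hB : ∀ g, ∑' i, ‖R i g‖ ^ 2 ≤ B * ‖g‖ ^ 2) (hB₀ : 0 ≤ B) (t : Finset ι) (f : E) :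
    ‖∑ i ∈ t, adjoint (R i) (R i f)‖ ≤ B * ‖f‖ := by
  refine le_of_pow_le_pow_left₀ two_ne_zero (by positivity) ?_
  calc ‖∑ i ∈ t, adjoint (R i) (R i f)‖ ^ 2 ≤ B * ∑ i ∈ t, ‖R i f‖ ^ 2 :=
        sq_norm_sum_adjoint_apply_apply_le hsum hB hB₀ t f
    _ ≤ B * (B * ‖f‖ ^ 2) := by
        gcongr
        exact ((hsum f).sum_le_tsum t fun i _ => by positivity).trans (hB f)
    _ = (B * ‖f‖) ^ 2 := by ring

theorem summable_adjoint_apply_apply (hsum : ∀ g, Summable fun i => ‖R i g‖ ^ 2)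
    (hB : ∀ g, ∑' i, ‖R i g‖ ^ 2 ≤ B * ‖g‖ ^ 2) (hB₀ : 0 < B) (f : E) :
    Summable fun i => adjoint (R i) (R i f) := by
  refine summable_iff_vanishing_norm.mpr fun ε hε => ?_
  obtain ⟨s, hs⟩ := summable_iff_vanishing_norm.mp (hsum f) (ε ^ 2 / B) (by positivity)
  refine ⟨s, fun t ht => lt_of_pow_lt_pow_left₀ 2 hε.le ?_⟩
  have hsmall : ∑ i ∈ t, ‖R i f‖ ^ 2 < ε ^ 2 / B := by
    simpa [Real.norm_eq_abs, abs_of_nonneg (by positivity : 0 ≤ ∑ i ∈ t, ‖R i f‖ ^ 2)]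
      using hs t ht
  calc ‖∑ i ∈ t, adjoint (R i) (R i f)‖ ^ 2 ≤ B * ∑ i ∈ t, ‖R i f‖ ^ 2 :=
        sq_norm_sum_adjoint_apply_apply_le hsum hB hB₀.le t f
    _ < B * (ε ^ 2 / B) := by gcongr
    _ = ε ^ 2 := by field_simp

theorem exists_hasSum_adjoint_apply_apply (hsum : ∀ g, Summable fun i => ‖R i g‖ ^ 2)
    (hB : ∀ g, ∑' i, ‖R i g‖ ^ 2 ≤ B * ‖g‖ ^ 2) (hB₀ : 0 < B) :
    ∃ S : E →L[𝕜] E, ∀ f, HasSum (fun i => adjoint (R i) (R i f)) (S f) := by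
  have hS := summable_adjoint_apply_apply hsum hB hB₀
  let S : E →ₗ[𝕜] E :=
    { toFun := fun f => ∑' i, adjoint (R i) (R i f)
      map_add' := fun f g => by simp only [map_add]; exact (hS f).tsum_add (hS g)
      map_smul' := fun c f => by simp only [map_smul]; exact (hS f).tsum_const_smul c }
  refine ⟨S.mkContinuous B fun f => ?_, fun f => (hS f).hasSum⟩
  exact le_of_tendsto' (hS f).hasSum.norm (norm_sum_adjoint_apply_apply_le hsum hB hB₀.le · f)

section OfHasSum

variable {S : E →L[𝕜] E}

theorem hasSum_inner_apply_apply_of_hasSum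
    (hS : ∀ f, HasSum (fun i => adjoint (R i) (R i f)) (S f)) (f g : E) :
    HasSum (fun i => ⟪R i f, R i g⟫_𝕜) ⟪S f, g⟫_𝕜 := by
  simpa only [innerSLFlip_apply_apply, adjoint_inner_left] using (hS f).mapL (innerSLFlip 𝕜 g)

theorem isSelfAdjoint_of_hasSum (hS : ∀ f, HasSum (fun i => adjoint (R i) (R i f)) (S f)) :
    IsSelfAdjoint S := by
  refine isSelfAdjoint_iff_isSymmetric.mpr fun f g => ?_
  refine (hasSum_inner_apply_apply_of_hasSum hS f g).unique ?_
  simpa only [inner_conj_symm, coe_coe] using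
    (RCLike.hasSum_conj' (𝕜 := 𝕜)).mpr (hasSum_inner_apply_apply_of_hasSum hS g f)

theorem hasSum_norm_sq_of_hasSum (hS : ∀ f, HasSum (fun i => adjoint (R i) (R i f)) (S f))
    (f : E) : HasSum (fun i => ‖R i f‖ ^ 2) (RCLike.re ⟪S f, f⟫_𝕜) := by
  simpa only [inner_self_eq_norm_sq] using
    RCLike.hasSum_re _ (hasSum_inner_apply_apply_of_hasSum hS f f)

theorem isPositive_of_hasSum (hS : ∀ f, HasSum (fun i => adjoint (R i) (R i f)) (S f)) :
    S.IsPositive :=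
  ⟨(isSelfAdjoint_of_hasSum hS).isSymmetric,
    fun f => (hasSum_norm_sq_of_hasSum hS f).nonneg fun _ => by positivity⟩

end OfHasSum

theorem isUnit_of_forall_le_re_inner_map {T : E →L[𝕜] E} {A : ℝ} (hA : 0 < A)
    (h : ∀ f, A * ‖f‖ ^ 2 ≤ RCLike.re ⟪T f, f⟫_𝕜) : IsUnit T :=
  isUnit_of_forall_le_norm_inner_map T (c := ⟨A, hA.le⟩) hA fun f =>
    (mul_comm _ _).le.trans ((h f).trans (RCLike.re_le_norm _))

end ContinuousLinearMap


theorem stmt_16_general {H : Type*} [NormedAddCommGroup H] [InnerProductSpace ℂ H] [CompleteSpace H]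
    {ι : Type*}
    (C C' : H →L[ℂ] H)
    (W : ι → Submodule ℂ H) [∀ i, CompleteSpace (W i)]
    (v : ι → ℝ)
    (sq : ι → H →L[ℂ] H)
    (hsq_pos : ∀ i, (sq i).IsPositive)
    (hsq_sq : ∀ i, sq i ∘L sq i = ctrlOp C C' (W i))
    (A B : ℝ) (hA : 0 < A) (hAB : A ≤ B)
    (hframe : ∀ f : H,
      Summable (fun i => v i ^ 2 * ‖sq i f‖ ^ 2) ∧
      A * ‖f‖ ^ 2 ≤ ∑' i, v i ^ 2 * ‖sq i f‖ ^ 2 ∧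
      (∑' i, v i ^ 2 * ‖sq i f‖ ^ 2) ≤ B * ‖f‖ ^ 2) :
    ∃ S : H ≃L[ℂ] H,
      (∀ f : H, HasSum (fun i => (v i ^ 2) • ctrlOp C C' (W i) f) (S f)) ∧
      IsSelfAdjoint (S : H →L[ℂ] H) ∧
      (S : H →L[ℂ] H).IsPositive ∧
      (∀ f : H, A * ‖f‖ ^ 2 ≤ (inner ℂ ((S : H →L[ℂ] H) f) f : ℂ).re ∧
        (inner ℂ ((S : H →L[ℂ] H) f) f : ℂ).re ≤ B * ‖f‖ ^ 2) := by
  set R : ι → H →L[ℂ] H := fun i => (v i : ℂ) • sq i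
  have hR : ∀ i f, adjoint (R i) (R i f) = (v i ^ 2) • ctrlOp C C' (W i) f := by
    intro i f
    rw [(IsSelfAdjoint.smul (Complex.conj_ofReal (v i)) (hsq_pos i).isSelfAdjoint).adjoint_eq,
      ← hsq_sq i]
    simp [R, smul_smul, pow_two]
  have hnorm : ∀ i f, ‖R i f‖ ^ 2 = v i ^ 2 * ‖sq i f‖ ^ 2 := fun i f => by
    simp [R, norm_smul, mul_pow]
  simp only [← hnorm] at hframe
  obtain ⟨S, hS⟩ := exists_hasSum_adjoint_apply_apply (fun f => (hframe f).1)
    (fun f => (hframe f).2.2) (hA.trans_le hAB)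
  have hre : ∀ f, (inner ℂ (S f) f).re = ∑' i, ‖R i f‖ ^ 2 := fun f =>
    (hasSum_norm_sq_of_hasSum hS f).tsum_eq.symm
  have hbounds : ∀ f, A * ‖f‖ ^ 2 ≤ (inner ℂ (S f) f).re ∧ (inner ℂ (S f) f).re ≤ B * ‖f‖ ^ 2 :=
    fun f => by rw [hre]; exact (hframe f).2
  have hsum : ∀ f, HasSum (fun i => (v i ^ 2) • ctrlOp C C' (W i) f) (S f) := by
    simpa only [hR] using hS
  have hunit : IsUnit S := isUnit_of_forall_le_re_inner_map hA fun f => (hbounds f).1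
  exact ⟨.ofUnit hunit.unit, hsum, isSelfAdjoint_of_hasSum hS, isPositive_of_hasSum hS, hbounds⟩

/-- If `{(W i, v i)}` is a `(C,C')`-controlled fusion frame with bounds
`A, B`, then the controlled fusion frame operator `S f = ∑ i, v i ^ 2 • (C* π_{W i} C') f` is a
well-defined bounded, self-adjoint, positive, invertible operator with
`A ‖f‖ ^ 2 ≤ ⟨S f, f⟩ ≤ B ‖f‖ ^ 2` for all `f`. -/
theorem stmt_16 {H : Type*} [NormedAddCommGroup H] [InnerProductSpace ℂ H] [CompleteSpace H]
    {ι : Type*} [Countable ι]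
    (C C' : H →L[ℂ] H) (hC : IsUnit C) (hC' : IsUnit C')
    (W : ι → Submodule ℂ H) [∀ i, CompleteSpace (W i)]
    (v : ι → ℝ) (hv : ∀ i, 0 < v i)
    (sq : ι → H →L[ℂ] H)
    (hGpos : ∀ i, (ctrlOp C C' (W i)).IsPositive)
    (hsq_pos : ∀ i, (sq i).IsPositive)
    (hsq_sq : ∀ i, sq i ∘L sq i = ctrlOp C C' (W i))
    (A B : ℝ) (hA : 0 < A) (hAB : A ≤ B)
    (hframe : ∀ f : H,
      Summable (fun i => v i ^ 2 * ‖sq i f‖ ^ 2) ∧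
      A * ‖f‖ ^ 2 ≤ ∑' i, v i ^ 2 * ‖sq i f‖ ^ 2 ∧
      (∑' i, v i ^ 2 * ‖sq i f‖ ^ 2) ≤ B * ‖f‖ ^ 2) :
    ∃ S : H ≃L[ℂ] H,
      (∀ f : H, HasSum (fun i => (v i ^ 2) • ctrlOp C C' (W i) f) (S f)) ∧
      IsSelfAdjoint (S : H →L[ℂ] H) ∧
      (S : H →L[ℂ] H).IsPositive ∧
      (∀ f : H, A * ‖f‖ ^ 2 ≤ (inner ℂ ((S : H →L[ℂ] H) f) f : ℂ).re ∧
        (inner ℂ ((S : H →L[ℂ] H) f) f : ℂ).re ≤ B * ‖f‖ ^ 2) :=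
  stmt_16_general C C' W v sq hsq_pos hsq_sq A B hA hAB hframe
end
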